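/- The evolution algebra A over ℤ/4ℤ with basis (x_i)_{i≥1} and relations x_i·x_i = 2x_i + x_{i+1}, x_i·x_j = 0 for i ≠ j, is nil but not nilpotent, is generated (as a non-unital, non-associative algebra) by the single element x_1, and its multiplication is not associative. (Theorem 3.1) -/

import Mathlib

/-!
The evolution algebra `A` over `R = ℤ/4ℤ` with basis `(x_i)_{i ≥ 1}` indexed by
`ℕ+` (underlying module `ℕ+ →₀ ZMod 4`, `x_i = Finsupp.single i 1`) and
relations `x_i · x_i = 2x_i + x_{i+1}`, `x_i · x_j = 0` for `i ≠ j`;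
concretely `(a · b) = ∑_i a(i) * b(i) • (2 • x_i + x_{i+1})`.
-/
noncomputable def evolMul {R : Type*} [CommRing R] {ι : Type*}
    (Csq : ι → ι →₀ R) (a b : ι →₀ R) : ι →₀ R :=
  a.sum fun i ai => (ai * b i) • Csq i

/-- The squares of the basis elements: `x_i · x_i = 2 • x_i + x_{i+1}`. -/
noncomputable def sqZ4 : ℕ+ → (ℕ+ →₀ ZMod 4) := fun i =>
  (2 : ZMod 4) • Finsupp.single i 1 + Finsupp.single (i + 1) 1

/-- Principal powers: `ppow mul a n = aⁿ` for `n ≥ 1`, defined by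
`a^1 = a` and `a^{n+1} = a^n · a`. -/
def ppow {A : Type*} (mul : A → A → A) (a : A) : ℕ → A
  | 0 => a
  | 1 => a
  | n + 2 => mul (ppow mul a (n + 1)) a

/-- Left-normed products: `lnp mul f m = ((f 0 · f 1) · f 2) ⋯ · f m`
is the left-normed product of the `m + 1` elements `f 0, …, f m`. -/
def lnp {A : Type*} (mul : A → A → A) (f : ℕ → A) : ℕ → A
  | 0 => f 0
  | m + 1 => mul (lnp mul f m) (f (m + 1))

/-!
In coordinates, `(x·y)_1 = 2 x_1 y_1` and `(x·y)_{j+1} = 2 x_{j+1} y_{j+1} + x_j y_j`. As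
`4 = 0`, doubling kills the first term: `2(x·y)_{j+1} = 2 x_j y_j`. So each multiplication by `a`
makes one more leading coordinate of `aⁿ` even, and once the coordinates of `x` up to `t + 1` are
even and those up to `t` vanish, the coordinates of `x·a` up to `t + 1` vanish. Hence `aⁿ`
vanishes at the coordinates `≤ n - 2`, while it stays supported in `[1, M + 1]` if `a` is
supported in `[1, M]`; thus `a^(M+3) = 0`. On the other hand the left-normed products
`((x_1 x_1) x_2) ⋯ x_m = x_m²` never vanish, `x_{i+1} = x_i² - 2x_i` shows that `x_1` generates,
and `(x_1 x_1) x_2 = x_2² ≠ 0 = x_1 (x_1 x_2)`.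
-/

section EvolutionAlgebra

variable {R ι : Type*} [CommRing R] (Csq : ι → ι →₀ R)

lemma evolMul_apply (a b : ι →₀ R) (k : ι) :
    evolMul Csq a b k = ∑ i ∈ a.support, a i * b i * Csq i k := by
  simp [evolMul, Finsupp.sum, Finsupp.finsetSum_apply, mul_assoc]

lemma evolMul_zero_right (a : ι →₀ R) : evolMul Csq a 0 = 0 := by
  simp [evolMul]

lemma evolMul_single_one_right (a : ι →₀ R) (j : ι) :
    evolMul Csq a (Finsupp.single j 1) = a j • Csq j := by
  rw [evolMul, Finsupp.sum_eq_single j]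
  · rw [Finsupp.single_eq_same, mul_one]
  · intro i _ hij
    rw [Finsupp.single_eq_of_ne hij, mul_zero, zero_smul]
  · intro _
    rw [zero_mul, zero_smul]

lemma evolMul_single_one_self (i : ι) :
    evolMul Csq (Finsupp.single i 1) (Finsupp.single i 1) = Csq i := by
  rw [evolMul_single_one_right, Finsupp.single_eq_same, one_smul]

end EvolutionAlgebra

lemma PNat.add_one_ne_one (i : ℕ+) : i + 1 ≠ 1 :=
  ne_of_gt (PNat.lt_add_left 1 i)

lemma ZMod.two_mul_two_mul (z : ZMod 4) : 2 * (2 * z) = 0 := by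
  revert z
  decide

lemma sqZ4_apply (i k : ℕ+) :
    sqZ4 i k = 2 * Finsupp.single i 1 k + Finsupp.single (i + 1) 1 k := by
  simp only [sqZ4, Finsupp.add_apply, Finsupp.smul_apply, smul_eq_mul]

lemma sqZ4_apply_add_one_self (i : ℕ+) : sqZ4 i (i + 1) = 1 := by
  simp [sqZ4_apply, (PNat.lt_add_right i 1).ne]

lemma sqZ4_ne_zero (i : ℕ+) : sqZ4 i ≠ 0 := by
  intro h
  have h1 := sqZ4_apply_add_one_self i
  rw [h, Finsupp.zero_apply] at h1
  exact absurd h1 (by decide)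

lemma evolMul_sqZ4_apply_one (a b : ℕ+ →₀ ZMod 4) :
    evolMul sqZ4 a b 1 = 2 * (a 1 * b 1) := by
  rw [evolMul_apply, Finset.sum_eq_single 1]
  · simp [sqZ4_apply, (PNat.add_one_ne_one 1).symm, mul_comm]
  · intro i _ hi
    simp [sqZ4_apply, hi, PNat.add_one_ne_one]
  · intro h
    simp [Finsupp.notMem_support_iff.mp h]

lemma evolMul_sqZ4_apply_add_one (a b : ℕ+ →₀ ZMod 4) (j : ℕ+) :
    evolMul sqZ4 a b (j + 1) = 2 * (a (j + 1) * b (j + 1)) + a j * b j := by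
  rw [evolMul_apply, Finset.sum_eq_add (j + 1) j (PNat.lt_add_right j 1).ne']
  · simp [sqZ4_apply, (PNat.lt_add_right j 1).ne, mul_comm]
  · intro i _ hi
    simp [sqZ4_apply, hi.1, hi.2]
  · intro h
    simp [Finsupp.notMem_support_iff.mp h]
  · intro h
    simp [Finsupp.notMem_support_iff.mp h]

lemma two_mul_evolMul_sqZ4_apply_eq_zero {x : ℕ+ →₀ ZMod 4} {t : ℕ}
    (hx : ∀ k : ℕ+, (k : ℕ) ≤ t → 2 * x k = 0) (y : ℕ+ →₀ ZMod 4) {k : ℕ+}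
    (hk : (k : ℕ) ≤ t + 1) : 2 * evolMul sqZ4 x y k = 0 := by
  rcases eq_or_ne k 1 with rfl | hk1
  · rw [evolMul_sqZ4_apply_one, ZMod.two_mul_two_mul]
  · obtain ⟨j, rfl⟩ := PNat.exists_eq_succ_of_ne_one hk1
    have hj : (j : ℕ) ≤ t := by simpa using hk
    rw [evolMul_sqZ4_apply_add_one, mul_add, ZMod.two_mul_two_mul, zero_add, ← mul_assoc,
      hx j hj, zero_mul]

lemma evolMul_sqZ4_apply_eq_zero {x : ℕ+ →₀ ZMod 4} {t : ℕ}
    (h2x : ∀ k : ℕ+, (k : ℕ) ≤ t + 1 → 2 * x k = 0) (hx : ∀ k : ℕ+, (k : ℕ) ≤ t → x k = 0)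
    (y : ℕ+ →₀ ZMod 4) {k : ℕ+} (hk : (k : ℕ) ≤ t + 1) : evolMul sqZ4 x y k = 0 := by
  rcases eq_or_ne k 1 with rfl | hk1
  · rw [evolMul_sqZ4_apply_one, ← mul_assoc, h2x 1 hk, zero_mul]
  · obtain ⟨j, rfl⟩ := PNat.exists_eq_succ_of_ne_one hk1
    have hj : (j : ℕ) ≤ t := by simpa using hk
    rw [evolMul_sqZ4_apply_add_one, ← mul_assoc, h2x _ hk, hx j hj, zero_mul, zero_mul,
      add_zero]

lemma evolMul_sqZ4_apply_eq_zero_of_lt {y : ℕ+ →₀ ZMod 4} {M : ℕ}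
    (hy : ∀ k : ℕ+, M < k → y k = 0) (x : ℕ+ →₀ ZMod 4) {k : ℕ+} (hk : M + 1 < k) :
    evolMul sqZ4 x y k = 0 := by
  obtain ⟨j, rfl⟩ := PNat.exists_eq_succ_of_ne_one (n := k) (by rintro rfl; simp at hk)
  have hj : M < (j : ℕ) := by simpa using hk
  rw [evolMul_sqZ4_apply_add_one, hy _ (by simpa using hj.trans (Nat.lt_succ_self _)),
    hy j hj, mul_zero, mul_zero, mul_zero, add_zero]

lemma two_mul_ppow_evolMul_sqZ4_apply_eq_zero (a : ℕ+ →₀ ZMod 4) (n : ℕ) {k : ℕ+}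
    (hk : (k : ℕ) ≤ n) : 2 * ppow (evolMul sqZ4) a (n + 1) k = 0 := by
  induction n generalizing k with
  | zero => exact absurd hk (by simp)
  | succ n ih => exact two_mul_evolMul_sqZ4_apply_eq_zero (fun _ => ih) a hk

lemma ppow_evolMul_sqZ4_apply_eq_zero (a : ℕ+ →₀ ZMod 4) (n : ℕ) {k : ℕ+}
    (hk : (k : ℕ) ≤ n) : ppow (evolMul sqZ4) a (n + 2) k = 0 := by
  induction n generalizing k with
  | zero => exact absurd hk (by simp)
  | succ n ih =>
    exact evolMul_sqZ4_apply_eq_zero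
      (fun _ => two_mul_ppow_evolMul_sqZ4_apply_eq_zero a (n + 1)) (fun _ => ih) a hk

lemma ppow_evolMul_sqZ4_apply_eq_zero_of_lt {a : ℕ+ →₀ ZMod 4} {M : ℕ}
    (ha : ∀ k : ℕ+, M < k → a k = 0) (n : ℕ) {k : ℕ+} (hk : M + 1 < k) :
    ppow (evolMul sqZ4) a n k = 0 := by
  match n with
  | 0 | 1 => exact ha k (by omega)
  | n + 2 => exact evolMul_sqZ4_apply_eq_zero_of_lt ha _ hk

theorem exists_ppow_evolMul_sqZ4_eq_zero (a : ℕ+ →₀ ZMod 4) :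
    ∃ n : ℕ, 1 ≤ n ∧ ppow (evolMul sqZ4) a n = 0 := by
  obtain ⟨M, hM⟩ : ∃ M : ℕ, ∀ k : ℕ+, M < k → a k = 0 :=
    ⟨a.support.sup (↑), fun k hk => Finsupp.notMem_support_iff.mp fun hmem =>
      (Finset.le_sup (f := ((↑) : ℕ+ → ℕ)) hmem).not_gt hk⟩
  refine ⟨M + 3, by omega, Finsupp.ext fun k => ?_⟩
  by_cases hk : (k : ℕ) ≤ M + 1
  · exact ppow_evolMul_sqZ4_apply_eq_zero a (M + 1) hk
  · exact ppow_evolMul_sqZ4_apply_eq_zero_of_lt hM _ (by omega)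

lemma lnp_evolMul_sqZ4_single_toPNat' (m : ℕ) :
    lnp (evolMul sqZ4) (fun m => Finsupp.single m.toPNat' 1) (m + 1) = sqZ4 (m + 1).toPNat' := by
  induction m with
  | zero => exact evolMul_single_one_self sqZ4 1
  | succ m ih =>
    change evolMul sqZ4 (lnp _ _ (m + 1)) (Finsupp.single ((m + 1).toPNat' + 1) 1) = _
    rw [ih, evolMul_single_one_right, sqZ4_apply_add_one_self, one_smul]
    rfl

theorem evolMul_sqZ4_not_nilpotent :
    ¬ ∃ n : ℕ, 2 ≤ n ∧ ∀ f : ℕ → (ℕ+ →₀ ZMod 4), lnp (evolMul sqZ4) f (n - 1) = 0 := by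
  rintro ⟨n, hn, h⟩
  obtain ⟨m, rfl⟩ : ∃ m, n = m + 2 := ⟨n - 2, by omega⟩
  exact sqZ4_ne_zero _ (lnp_evolMul_sqZ4_single_toPNat' m ▸ h _)

theorem mem_of_single_one_mem_of_evolMul_sqZ4_mem
    (p : Submodule (ZMod 4) (ℕ+ →₀ ZMod 4)) (h1 : Finsupp.single 1 1 ∈ p)
    (hmul : ∀ a b : ℕ+ →₀ ZMod 4, a ∈ p → b ∈ p → evolMul sqZ4 a b ∈ p)
    (z : ℕ+ →₀ ZMod 4) : z ∈ p := by
  have hsingle (i : ℕ+) : Finsupp.single i 1 ∈ p := by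
    induction i using PNat.recOn with
    | one => exact h1
    | succ i ih =>
      have hsq : Finsupp.single (i + 1) 1 = sqZ4 i - (2 : ZMod 4) • Finsupp.single i 1 := by
        rw [sqZ4, add_sub_cancel_left]
      rw [hsq, ← evolMul_single_one_self sqZ4 i]
      exact p.sub_mem (hmul _ _ ih ih) (p.smul_mem _ ih)
  refine Submodule.span_le.mpr ?_ (Finsupp.basisSingleOne.mem_span z)
  rintro _ ⟨i, rfl⟩
  simpa using hsingle i

theorem evolMul_sqZ4_not_assoc :
    ¬ ∀ a b c : ℕ+ →₀ ZMod 4,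
      evolMul sqZ4 (evolMul sqZ4 a b) c = evolMul sqZ4 a (evolMul sqZ4 b c) := by
  intro h
  have h := h (Finsupp.single 1 1) (Finsupp.single 1 1) (Finsupp.single (1 + 1) 1)
  rw [evolMul_single_one_self, evolMul_single_one_right, evolMul_single_one_right,
    sqZ4_apply_add_one_self, Finsupp.single_eq_of_ne (PNat.add_one_ne_one 1), zero_smul,
    evolMul_zero_right, one_smul] at h
  exact sqZ4_ne_zero _ h

/-- Theorem 3.1: The evolution algebra over `ℤ/4ℤ` with
`x_i·x_i = 2x_i + x_{i+1}` is nil but not nilpotent, is generated (as a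
non-unital, non-associative algebra, i.e. the smallest mul-closed submodule)
by the single element `x_1`, and its multiplication is not associative. -/
theorem example_Z4_nil_not_nilpotent_generated_by_x1 :
    (∀ a : ℕ+ →₀ ZMod 4, ∃ n : ℕ, 1 ≤ n ∧ ppow (evolMul sqZ4) a n = 0) ∧
    ¬ (∃ n : ℕ, 2 ≤ n ∧
        ∀ f : ℕ → (ℕ+ →₀ ZMod 4), lnp (evolMul sqZ4) f (n - 1) = 0) ∧
    (∀ p : Submodule (ZMod 4) (ℕ+ →₀ ZMod 4),
        Finsupp.single 1 1 ∈ p →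
        (∀ a b : ℕ+ →₀ ZMod 4, a ∈ p → b ∈ p → evolMul sqZ4 a b ∈ p) →
        ∀ z : ℕ+ →₀ ZMod 4, z ∈ p) ∧
    ¬ (∀ a b c : ℕ+ →₀ ZMod 4,
        evolMul sqZ4 (evolMul sqZ4 a b) c = evolMul sqZ4 a (evolMul sqZ4 b c)) :=
  ⟨exists_ppow_evolMul_sqZ4_eq_zero, evolMul_sqZ4_not_nilpotent,
    mem_of_single_one_mem_of_evolMul_sqZ4_mem, evolMul_sqZ4_not_assoc⟩
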